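/- arXiv:1311.5646 — 2 statements merged into one kernel-verified Lean document; each statement's English description precedes it below -/
import Mathlib

section
/- Let ℓ be a positive odd integer with at most t distinct prime factors. Suppose there exist t+1 primes p₁ < p₂ < ⋯ < p_{t+1} with p₁ ≥ 3 such that for any two indices i ≠ j, the numbers pᵢ − 1 and p_j − 1 have no common odd prime factor. Then for every integer n with p_{t+1} − 1 ≤ n ≤ 2p₁ − 2, the product Ω_ℓ(n) = (1^ℓ+1)(2^ℓ+1)···(n^ℓ+1) is not a powerful number. -/
/-!
Among the primes `p i`, at most `t` can share a prime factor with `ℓ`, either as `p i` itself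
or through `p i - 1`: distinct such indices get distinct factors of `ℓ`, because two numbers
`p i - 1` share no odd prime, and `p j ∣ p i - 1` is impossible when all `p i` lie within a
factor `2` of each other. So some prime `P = p i` has `P ∤ ℓ` and `gcd (P - 1, ℓ) = 1`.
Then `x ↦ x ^ ℓ` is injective on `ZMod P`, so `P ∣ a ^ ℓ + 1` forces `a ≡ -1 (mod P)`, and
in the range `1 ≤ a ≤ n < 2P - 1` only `a = P - 1` qualifies. Lifting the exponent gives
`v_P((P - 1) ^ ℓ + 1) = v_P(P) + v_P(ℓ) = 1`, hence `v_P(Ω_ℓ(n)) = 1`.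
-/

/-- `m` is a powerful number: every prime dividing `m` divides it with exponent at least 2. -/
def IsPowerful (m : ℕ) : Prop := ∀ p : ℕ, p.Prime → p ∣ m → p ^ 2 ∣ m

/-- `Omega ℓ n = (1^ℓ+1)(2^ℓ+1)⋯(n^ℓ+1)`. -/
def Omega (ℓ n : ℕ) : ℕ := ∏ a ∈ Finset.Icc 1 n, (a ^ ℓ + 1)

theorem pow_left_injective_of_coprime_card_sub_one {G₀ : Type*} [GroupWithZero G₀] {n : ℕ}
    (hn : n ≠ 0) (hcop : (Nat.card G₀ - 1).Coprime n) :
    Function.Injective (fun x : G₀ => x ^ n) := by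
  intro x y h
  simp only at h
  by_cases hx : x = 0
  · rw [hx, zero_pow hn, eq_comm, pow_eq_zero_iff hn] at h
    rw [hx, h]
  by_cases hy : y = 0
  · rw [hy, zero_pow hn, pow_eq_zero_iff hn] at h
    exact absurd h hx
  have hcop' : (Nat.card G₀ˣ).Coprime n := by rwa [Nat.card_units]
  have hunits : Units.mk0 x hx ^ n = Units.mk0 y hy ^ n := Units.ext (by simpa using h)
  simpa using congrArg Units.val (hcop'.pow_left_bijective.injective hunits)

theorem ZMod.eq_neg_one_of_pow_eq_neg_one {p ℓ : ℕ} [Fact p.Prime] (hℓ : Odd ℓ)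
    (hcop : (p - 1).Coprime ℓ) {x : ZMod p} (hx : x ^ ℓ = -1) : x = -1 :=
  pow_left_injective_of_coprime_card_sub_one hℓ.pos.ne' (by rwa [Nat.card_zmod])
    (by simp only [hx, hℓ.neg_one_pow])

theorem eq_pred_of_dvd_pow_add_one {p ℓ a : ℕ} [hp : Fact p.Prime] (hℓ : Odd ℓ)
    (hcop : (p - 1).Coprime ℓ) (ha : a < 2 * p - 1) (h : p ∣ a ^ ℓ + 1) : a = p - 1 := by
  rw [← ZMod.natCast_eq_zero_iff] at h
  push_cast at h
  have hroot : (a : ZMod p) = -1 :=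
    ZMod.eq_neg_one_of_pow_eq_neg_one hℓ hcop (by linear_combination h)
  have hdvd : p ∣ a + 1 := by
    rw [← ZMod.natCast_eq_zero_iff]
    push_cast
    rw [hroot, neg_add_cancel]
  have := Nat.eq_of_dvd_of_lt_two_mul (Nat.succ_ne_zero a) hdvd (by omega)
  omega

theorem padicValNat_pred_pow_add_one {p ℓ : ℕ} [hp : Fact p.Prime] (hp_odd : Odd p)
    (hℓ : Odd ℓ) (hpℓ : ¬ p ∣ ℓ) : padicValNat p ((p - 1) ^ ℓ + 1) = 1 := by
  have hp2 := hp.out.two_le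
  have hsum : p - 1 + 1 = p := by omega
  have hndvd : ¬ p ∣ p - 1 := Nat.not_dvd_of_pos_of_lt (by omega) (by omega)
  have := padicValNat.pow_add_pow (y := 1) hp_odd (by rw [hsum]) hndvd hℓ
  rwa [one_pow, hsum, padicValNat_self, padicValNat.eq_zero_of_not_dvd hpℓ] at this

theorem padicValNat_omega_eq_one {p ℓ n : ℕ} [hp : Fact p.Prime] (hp_odd : Odd p) (hℓ : Odd ℓ)
    (hcop : (p * (p - 1)).Coprime ℓ) (hlow : p - 1 ≤ n) (hhigh : n < 2 * p - 1) :
    padicValNat p (Omega ℓ n) = 1 := by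
  have hmem : p - 1 ∈ Finset.Icc 1 n :=
    Finset.mem_Icc.2 ⟨by have := hp.out.two_le; omega, hlow⟩
  have hrest : ¬ p ∣ ∏ a ∈ (Finset.Icc 1 n).erase (p - 1), (a ^ ℓ + 1) := by
    rw [hp.out.prime.dvd_finsetProd_iff]
    rintro ⟨a, ha, hdvd⟩
    have ha_le : a ≤ n := (Finset.mem_Icc.1 (Finset.mem_of_mem_erase ha)).2
    exact Finset.ne_of_mem_erase ha
      (eq_pred_of_dvd_pow_add_one hℓ (Nat.Coprime.coprime_mul_left hcop) (by omega) hdvd)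
  have hpℓ : ¬ p ∣ ℓ := (hp.out.coprime_iff_not_dvd).1 (Nat.Coprime.coprime_mul_right hcop)
  rw [Omega, ← Finset.mul_prod_erase _ _ hmem,
    padicValNat.mul (by positivity) (fun h => hrest (by rw [h]; exact dvd_zero p)),
    padicValNat.eq_zero_of_not_dvd hrest, padicValNat_pred_pow_add_one hp_odd hℓ hpℓ]

theorem not_isPowerful_of_padicValNat_eq_one {p m : ℕ} [hp : Fact p.Prime]
    (h : padicValNat p m = 1) : ¬ IsPowerful m := by
  intro hm
  have hm0 : m ≠ 0 := by rintro rfl; simp at h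
  have := (padicValNat_dvd_iff_le hm0).1 (hm p hp.out (dvd_of_one_le_padicValNat h.ge))
  omega

theorem Nat.Prime.not_dvd_pred_of_lt_two_mul {p q : ℕ} (hp : p.Prime) (hq : q.Prime)
    (hq_odd : Odd q) (hpq : p < 2 * q) : ¬ q ∣ p - 1 := by
  intro hdvd
  have := hp.two_le
  have hpq' : p - 1 = q := Nat.eq_of_dvd_of_lt_two_mul (by omega) hdvd (by omega)
  have hp2 : p = 2 := hp.even_iff.1 (by rw [show p = q + 1 by omega]; exact hq_odd.add_one)
  have := hq.two_le
  omega

theorem exists_coprime_mul_pred_of_card_primeFactors_lt {ι : Type*} [Fintype ι] {ℓ : ℕ}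
    (hℓ : Odd ℓ) (hcard : ℓ.primeFactors.card < Fintype.card ι) {p : ι → ℕ}
    (hinj : Function.Injective p) (hprime : ∀ i, (p i).Prime) (hsmall : ∀ i j, p i < 2 * p j)
    (hcop : ∀ i j, i ≠ j → ∀ q : ℕ, q.Prime → Odd q → q ∣ p i - 1 → ¬ q ∣ p j - 1) :
    ∃ i, (p i * (p i - 1)).Coprime ℓ := by
  by_contra! hbad
  choose q hq hqdvd hqℓ using fun i => Nat.Prime.not_coprime_iff_dvd.1 (hbad i)
  have hodd : ∀ i, Odd (q i) := fun i => hℓ.of_dvd_nat (hqℓ i)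
  have hcases : ∀ i, q i = p i ∨ q i ∣ p i - 1 := fun i =>
    ((hq i).dvd_mul.1 (hqdvd i)).imp_left ((Nat.prime_dvd_prime_iff_eq (hq i) (hprime i)).1)
  have hq_inj : Function.Injective q := by
    intro i j hij
    by_contra hne
    rcases hcases i with hi | hi <;> rcases hcases j with hj | hj
    · exact hne (hinj (hi.symm.trans (hij.trans hj)))
    · exact (hprime j).not_dvd_pred_of_lt_two_mul (hprime i) (hi ▸ hodd i) (hsmall j i)
        (by rwa [← hij, hi] at hj)
    · exact (hprime i).not_dvd_pred_of_lt_two_mul (hprime j) (hj ▸ hodd j) (hsmall i j)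
        (by rwa [hij, hj] at hi)
    · exact hcop i j hne (q i) (hq i) (hodd i) hi (hij ▸ hj)
  have hmem : ∀ i ∈ Finset.univ, q i ∈ ℓ.primeFactors := fun i _ =>
    Nat.mem_primeFactors.2 ⟨hq i, hqℓ i, hℓ.pos.ne'⟩
  have := Finset.card_le_card_of_injOn q hmem hq_inj.injOn
  rw [Finset.card_univ] at this
  omega

theorem stmt_5_general (ℓ t : ℕ) (hℓodd : Odd ℓ)
    (hfac : ℓ.primeFactors.card ≤ t)
    (p : Fin (t + 1) → ℕ) (hmono : StrictMono p)
    (hprime : ∀ i, (p i).Prime) (h3 : 3 ≤ p 0)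
    (hcop : ∀ i j, i ≠ j → ∀ q : ℕ, q.Prime → Odd q →
      q ∣ p i - 1 → ¬ q ∣ p j - 1)
    (n : ℕ) (hlow : p (Fin.last t) - 1 ≤ n) (hhigh : n ≤ 2 * p 0 - 2) :
    ¬ IsPowerful (Omega ℓ n) := by
  have hle_last : ∀ i, p i ≤ p (Fin.last t) := fun i => hmono.monotone (Fin.le_last i)
  have hge_zero : ∀ i, p 0 ≤ p i := fun i => hmono.monotone (Fin.zero_le i)
  have hsmall : ∀ i j, p i < 2 * p j := fun i j => by grind
  obtain ⟨i, hi⟩ := exists_coprime_mul_pred_of_card_primeFactors_lt hℓodd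
    (by rw [Fintype.card_fin]; omega) hmono.injective hprime hsmall hcop
  have : Fact (p i).Prime := ⟨hprime i⟩
  have hp_odd : Odd (p i) := (hprime i).odd_of_ne_two (by grind)
  exact not_isPowerful_of_padicValNat_eq_one
    (padicValNat_omega_eq_one hp_odd hℓodd hi (by grind) (by grind))

theorem stmt_5 (ℓ t : ℕ) (hℓpos : 0 < ℓ) (hℓodd : Odd ℓ)
    (hfac : ℓ.primeFactors.card ≤ t)
    (p : Fin (t + 1) → ℕ) (hmono : StrictMono p)
    (hprime : ∀ i, (p i).Prime) (h3 : 3 ≤ p 0)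
    (hcop : ∀ i j, i ≠ j → ∀ q : ℕ, q.Prime → Odd q →
      q ∣ p i - 1 → ¬ q ∣ p j - 1)
    (n : ℕ) (hlow : p (Fin.last t) - 1 ≤ n) (hhigh : n ≤ 2 * p 0 - 2) :
    ¬ IsPowerful (Omega ℓ n) :=
  stmt_5_general ℓ t hℓodd hfac p hmono hprime h3 hcop n hlow hhigh
end

section
/- Let ℓ be a positive odd integer with at most two distinct prime factors. Then for every integer n with 22 ≤ n ≤ 476, the product Ω_ℓ(n) = (1^ℓ+1)(2^ℓ+1)···(n^ℓ+1) is not a powerful number. -/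
/-!
Let `p` be an odd prime with `p ∤ ℓ` and `gcd(ℓ, p - 1) = 1`. Since `ℓ` is odd, `p ∣ a^ℓ + 1` forces
`(-a)^ℓ = 1` in `ZMod p`, hence `a ≡ -1 (mod p)`; so if `p - 1 ≤ n ≤ 2p - 2` the only factor of
`Ω_ℓ(n)` divisible by `p` is `(p - 1)^ℓ + 1`, which by lifting the exponent is divisible by `p`
exactly once. Thus `p ∥ Ω_ℓ(n)` and `Ω_ℓ(n)` is not powerful.

If `p₁ ≤ p₂ ≤ p₃` are odd primes such that the numbers `pᵢ(pᵢ - 1)` pairwise share only the prime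
factor `2`, every odd prime factor of `ℓ` divides at most one of them, so when `ℓ` has at most two
prime factors some `pᵢ(pᵢ - 1)` is coprime to `ℓ`. Seven such triples of primes cover `22 ≤ n ≤ 476`.
-/

theorem Nat.Prime.dvd_add_one_of_dvd_pow_add_one {p ℓ a : ℕ} (hp : p.Prime) (hℓ : Odd ℓ)
    (hcop : (p - 1).Coprime ℓ) (h : p ∣ a ^ ℓ + 1) : p ∣ a + 1 := by
  have := Fact.mk hp
  have hpow : (-(a : ZMod p)) ^ ℓ = 1 := by
    have : (a : ZMod p) ^ ℓ + 1 = 0 := by exact_mod_cast (ZMod.natCast_eq_zero_iff _ _).2 h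
    rw [hℓ.neg_pow, neg_eq_iff_eq_neg, ← eq_neg_iff_add_eq_zero.2 this]
  have hne : -(a : ZMod p) ≠ 0 := by
    rintro h0
    rw [h0, zero_pow hℓ.pos.ne'] at hpow
    exact zero_ne_one hpow
  have hone : -(a : ZMod p) = 1 :=
    (pow_eq_one_iff_of_coprime hcop).1 ⟨ZMod.pow_card_sub_one_eq_one hne, hpow⟩
  rw [← ZMod.natCast_eq_zero_iff]
  push_cast
  linear_combination -hone

theorem Nat.Prime.factorization_pred_pow_add_one {p ℓ : ℕ} (hp : p.Prime) (hp2 : p ≠ 2)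
    (hℓ : Odd ℓ) (hpℓ : ¬p ∣ ℓ) : ((p - 1) ^ ℓ + 1).factorization p = 1 := by
  have := Fact.mk hp
  have hsucc : p - 1 + 1 = p := Nat.sub_add_cancel hp.one_le
  have hlte := padicValNat.pow_add_pow (x := p - 1) (y := 1) (hp.odd_of_ne_two hp2)
    (by rw [hsucc]) (Nat.not_dvd_of_pos_of_lt (by have := hp.two_le; omega) (by omega)) hℓ
  rw [one_pow, hsucc, padicValNat_self, padicValNat.eq_zero_of_not_dvd hpℓ] at hlte
  rw [Nat.factorization_def _ hp, hlte]

theorem factorization_omega_eq_one {p ℓ n : ℕ} (hp : p.Prime) (hp2 : p ≠ 2) (hℓ : Odd ℓ)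
    (hcop : (p * (p - 1)).Coprime ℓ) (h₁ : p - 1 ≤ n) (h₂ : n ≤ 2 * p - 2) :
    (Omega ℓ n).factorization p = 1 := by
  have hpℓ : ¬p ∣ ℓ := fun h ↦ hp.one_lt.ne' (Nat.eq_one_of_dvd_coprimes
    (Nat.Coprime.coprime_dvd_left (dvd_mul_right p _) hcop) dvd_rfl h)
  have hcop' : (p - 1).Coprime ℓ := Nat.Coprime.coprime_dvd_left (dvd_mul_left _ p) hcop
  unfold Omega
  rw [Nat.factorization_prod fun a _ ↦ by positivity, Finsupp.finsetSum_apply]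
  refine (Finset.sum_eq_single (p - 1) (fun a ha hne ↦ ?_) (fun h ↦ ?_)).trans
    (hp.factorization_pred_pow_add_one hp2 hℓ hpℓ)
  · refine Nat.factorization_eq_zero_of_not_dvd fun hdvd ↦ hne ?_
    have := Finset.mem_Icc.1 ha
    have := Nat.eq_of_dvd_of_lt_two_mul (by omega)
      (hp.dvd_add_one_of_dvd_pow_add_one hℓ hcop' hdvd) (by omega)
    omega
  · exact absurd (Finset.mem_Icc.2 ⟨by have := hp.two_le; omega, h₁⟩) h

theorem not_isPowerful_of_factorization_eq_one {m p : ℕ} (hp : p.Prime)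
    (h : m.factorization p = 1) : ¬IsPowerful m := by
  intro hm
  have hm0 : m ≠ 0 := by rintro rfl; simp at h
  have := (hp.pow_dvd_iff_le_factorization hm0).1 (hm p hp (Nat.dvd_of_factorization_pos (by omega)))
  omega

theorem Nat.exists_coprime_of_card_primeFactors_lt {ι : Type*} {s : Finset ι} {f : ι → ℕ}
    {ℓ : ℕ} (hℓ : ℓ ≠ 0) (hpair : (s : Set ι).Pairwise fun i j ↦ ((f i).gcd (f j)).Coprime ℓ)
    (hcard : ℓ.primeFactors.card < s.card) : ∃ i ∈ s, (f i).Coprime ℓ := by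
  by_contra! h
  choose! q hq using fun i hi ↦ Nat.Prime.not_coprime_iff_dvd.1 (h i hi)
  obtain ⟨i, hi, j, hj, hij, hqij⟩ := Finset.exists_ne_map_eq_of_card_lt_of_maps_to hcard
    (f := q) fun i hi ↦ Nat.mem_primeFactors.2 ⟨(hq i hi).1, (hq i hi).2.2, hℓ⟩
  obtain ⟨hqi, hqfi, hqℓ⟩ := hq i hi
  have hqfj : q i ∣ f j := hqij ▸ (hq j hj).2.1
  exact hqi.one_lt.ne' (Nat.eq_one_of_dvd_coprimes (hpair hi hj hij) (Nat.dvd_gcd hqfi hqfj) hqℓ)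

theorem not_isPowerful_omega_of_primes {ℓ n : ℕ} (hℓ : Odd ℓ) (s : Finset ℕ)
    (hcard : ℓ.primeFactors.card < s.card) (hprime : ∀ p ∈ s, p.Prime ∧ p ≠ 2)
    (hgcd : ∀ p ∈ s, ∀ q ∈ s, p ≠ q → ((p * (p - 1)).gcd (q * (q - 1))).isPowerOfTwo)
    (hn : ∀ p ∈ s, p - 1 ≤ n ∧ n ≤ 2 * p - 2) : ¬IsPowerful (Omega ℓ n) := by
  have hpair : (s : Set ℕ).Pairwise fun p q ↦ ((p * (p - 1)).gcd (q * (q - 1))).Coprime ℓ := by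
    intro p hp q hq hpq
    obtain ⟨k, hk⟩ := hgcd p hp q hq hpq
    exact hk ▸ Nat.Coprime.pow_left k (Nat.coprime_two_left.2 hℓ)
  obtain ⟨p, hps, hcop⟩ := Nat.exists_coprime_of_card_primeFactors_lt hℓ.pos.ne' hpair hcard
  exact not_isPowerful_of_factorization_eq_one (hprime p hps).1
    (factorization_omega_eq_one (hprime p hps).1 (hprime p hps).2 hℓ hcop (hn p hps).1 (hn p hps).2)

theorem stmt_16_general (ℓ : ℕ) (hℓodd : Odd ℓ)
    (hfac : ℓ.primeFactors.card ≤ 2) (n : ℕ) (hlow : 22 ≤ n) (hhigh : n ≤ 476) :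
    ¬ IsPowerful (Omega ℓ n) := by
  have cover (s : Finset ℕ) (hs : 2 < s.card) :=
    not_isPowerful_omega_of_primes (n := n) hℓodd s (hfac.trans_lt hs)
  rcases le_or_gt n 32 with h | h
  · exact cover {17, 19, 23} (by decide) (by norm_num) (by decide) (by simp; omega)
  rcases le_or_gt n 44 with h | h
  · exact cover {23, 29, 31} (by decide) (by norm_num) (by decide) (by simp; omega)
  rcases le_or_gt n 56 with h | h
  · exact cover {29, 37, 41} (by decide) (by norm_num) (by decide) (by simp; omega)
  rcases le_or_gt n 84 with h | h
  · exact cover {43, 47, 53} (by decide) (by norm_num) (by decide) (by simp; omega)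
  rcases le_or_gt n 140 with h | h
  · exact cover {71, 73, 83} (by decide) (by norm_num) (by decide) (by simp; omega)
  rcases le_or_gt n 260 with h | h
  · exact cover {131, 137, 139} (by decide) (by norm_num) (by decide) (by simp; omega)
  · exact cover {239, 241, 257} (by decide) (by norm_num) (by decide) (by simp; omega)

theorem stmt_16 (ℓ : ℕ) (hℓpos : 0 < ℓ) (hℓodd : Odd ℓ)
    (hfac : ℓ.primeFactors.card ≤ 2) (n : ℕ) (hlow : 22 ≤ n) (hhigh : n ≤ 476) :
    ¬ IsPowerful (Omega ℓ n) :=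
  stmt_16_general ℓ hℓodd hfac n hlow hhigh
end
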